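/- Let G be a connected graph with adjacency matrix eigenvalues μ₁ ≥ ... ≥ μₙ where μₙ < 0. Then 1 + μ₁/|μₙ| ≤ χ_v(G) (Hoffman bound for the vector chromatic number). -/

import Mathlib

open Matrix Finset
open scoped Kronecker Classical

/-- Largest eigenvalue (spectral supremum) of a real matrix. -/
noncomputable def lamMax {n : ℕ} (M : Matrix (Fin n) (Fin n) ℝ) : ℝ := sSup (spectrum ℝ M)

/-- Smallest eigenvalue (spectral infimum) of a real matrix. -/
noncomputable def lamMin {n : ℕ} (M : Matrix (Fin n) (Fin n) ℝ) : ℝ := sInf (spectrum ℝ M)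

/-- Diagonal matrix of vertex degrees. -/
noncomputable def degMatrix {n : ℕ} (G : SimpleGraph (Fin n)) : Matrix (Fin n) (Fin n) ℝ :=
  Matrix.diagonal fun i => (G.degree i : ℝ)

/-- The vector chromatic number: the smallest real `k ≥ 2` such that there exist unit
vectors `u i` with `⟪u i, u j⟫ ≤ -1/(k-1)` for all edges `ij`. -/
noncomputable def vecChromNum {V : Type*} [Fintype V] (G : SimpleGraph V) : ℝ :=
  sInf {k : ℝ | 2 ≤ k ∧ ∃ u : V → EuclideanSpace ℝ V,
    (∀ i, ‖u i‖ = 1) ∧ ∀ i j, G.Adj i j → (inner ℝ (u i) (u j) : ℝ) ≤ -(1/(k-1))}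

/-!
Let `x` be a unit eigenvector of the adjacency matrix `A` for `λ_max`. Since `A ≥ 0` entrywise,
`y = |x|` satisfies `λ_max ≤ yᵀ A y`. For a vector colouring `u` with Gram matrix `M`, the Schur
product theorem makes `(A - λ_min I) ⊙ M` positive semidefinite, and `M` has unit diagonal, so
`λ_min ≤ yᵀ (A ⊙ M) y ≤ -(1/(k-1)) yᵀ A y ≤ -λ_max/(k-1)`.
-/

section QuadraticForm

variable {ι : Type*} [Fintype ι]

theorem Matrix.dotProduct_mulVec_eq_sum (A : Matrix ι ι ℝ) (x : ι → ℝ) :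
    x ⬝ᵥ (A *ᵥ x) = ∑ i, ∑ j, x i * A i j * x j := by
  simp only [dotProduct, mulVec, Finset.mul_sum, mul_assoc]

theorem Matrix.dotProduct_mulVec_le_abs {A : Matrix ι ι ℝ} (hA : ∀ i j, 0 ≤ A i j)
    (x : ι → ℝ) : x ⬝ᵥ (A *ᵥ x) ≤ |x| ⬝ᵥ (A *ᵥ |x|) := by
  simp only [dotProduct_mulVec_eq_sum, Pi.abs_apply]
  refine Finset.sum_le_sum fun i _ => Finset.sum_le_sum fun j _ => ?_
  calc x i * A i j * x j ≤ |x i * A i j * x j| := le_abs_self _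
    _ = |x i| * A i j * |x j| := by rw [abs_mul, abs_mul, abs_of_nonneg (hA i j)]

theorem Matrix.dotProduct_mulVec_mono {B C : Matrix ι ι ℝ} (hBC : ∀ i j, B i j ≤ C i j)
    {x : ι → ℝ} (hx : 0 ≤ x) : x ⬝ᵥ (B *ᵥ x) ≤ x ⬝ᵥ (C *ᵥ x) := by
  simp only [dotProduct_mulVec_eq_sum]
  gcongr with i _ j _
  · exact hx j
  · exact hx i
  · exact hBC i j

end QuadraticForm

open scoped MatrixOrder in
theorem Matrix.IsHermitian.posSemidef_sub_lamMin {n : ℕ} {A : Matrix (Fin n) (Fin n) ℝ}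
    (hA : A.IsHermitian) : (A - algebraMap ℝ _ (lamMin A)).PosSemidef := by
  rw [← Matrix.le_iff, algebraMap_le_iff_le_spectrum hA.isSelfAdjoint]
  exact fun x hx => csInf_le A.finite_real_spectrum.bddBelow hx

theorem Matrix.IsHermitian.exists_dotProduct_mulVec_eq_lamMax {n : ℕ} [NeZero n]
    {A : Matrix (Fin n) (Fin n) ℝ} (hA : A.IsHermitian) :
    ∃ x : Fin n → ℝ, x ⬝ᵥ x = 1 ∧ x ⬝ᵥ (A *ᵥ x) = lamMax A := by
  have hmem : lamMax A ∈ spectrum ℝ A := by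
    refine Set.Nonempty.csSup_mem ?_ A.finite_real_spectrum
    rw [hA.spectrum_real_eq_range_eigenvalues]
    exact Set.range_nonempty _
  rw [hA.spectrum_real_eq_range_eigenvalues] at hmem
  obtain ⟨i, hi⟩ := hmem
  set x := hA.eigenvectorBasis i
  have hx : x.ofLp ⬝ᵥ x.ofLp = 1 := by
    have := real_inner_self_eq_norm_sq x
    rw [hA.eigenvectorBasis.orthonormal.1 i, EuclideanSpace.inner_eq_star_dotProduct] at this
    simpa using this
  refine ⟨x.ofLp, hx, ?_⟩
  rw [hA.mulVec_eigenvectorBasis i, dotProduct_smul, hx, hi, smul_eq_mul, mul_one]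

theorem Matrix.IsHermitian.lamMin_mul_dotProduct_self_le_hadamard_gram {n : ℕ}
    {A : Matrix (Fin n) (Fin n) ℝ} (hA : A.IsHermitian) {E : Type*} [NormedAddCommGroup E]
    [InnerProductSpace ℝ E] {v : Fin n → E} (hv : ∀ i, ‖v i‖ = 1) (x : Fin n → ℝ) :
    lamMin A * (x ⬝ᵥ x) ≤ x ⬝ᵥ ((A ⊙ gram ℝ v) *ᵥ x) := by
  have hshift : (A - algebraMap ℝ _ (lamMin A)) ⊙ gram ℝ v = A ⊙ gram ℝ v - lamMin A • 1 := by
    ext i j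
    rcases eq_or_ne i j with rfl | hij
    · simp [Algebra.algebraMap_eq_smul_one, hv i]
    · simp [Algebra.algebraMap_eq_smul_one, one_apply_ne hij]
  have hschur :=
    (hA.posSemidef_sub_lamMin.hadamard (posSemidef_gram ℝ v)).dotProduct_mulVec_nonneg x
  rw [hshift, sub_mulVec, dotProduct_sub, smul_mulVec, one_mulVec, dotProduct_smul,
    star_trivial, smul_eq_mul] at hschur
  linarith

theorem EuclideanSpace.exists_regular_simplex {ι : Type*} [Fintype ι] [DecidableEq ι]
    (h : 2 ≤ Fintype.card ι) :
    ∃ u : ι → EuclideanSpace ℝ ι, (∀ i, ‖u i‖ = 1) ∧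
      ∀ i j, i ≠ j → inner ℝ (u i) (u j) = -(1 / ((Fintype.card ι : ℝ) - 1)) := by
  set N : ℝ := (Fintype.card ι : ℝ)
  have hN : 2 ≤ N := by simpa [N] using (Nat.cast_le (α := ℝ)).mpr h
  let w : ι → EuclideanSpace ℝ ι := fun i =>
    EuclideanSpace.single i 1 - WithLp.toLp 2 (fun _ => 1 / N)
  have hw : ∀ i j, inner ℝ (w i) (w j) = (if i = j then 1 else 0) - 1 / N := by
    intro i j
    simp [w, inner_sub_left, inner_sub_right, EuclideanSpace.inner_single_left,
      EuclideanSpace.inner_single_right, EuclideanSpace.real_norm_sq_eq, eq_comm (a := j)]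
    field_simp
    simp [N]
  set s := √(N / (N - 1))
  have hs : s ^ 2 = N / (N - 1) := Real.sq_sqrt (div_nonneg (by linarith) (by linarith))
  have hsw : ∀ i j,
      inner ℝ (s • w i) (s • w j) = s ^ 2 * ((if i = j then 1 else 0) - 1 / N) := by
    intro i j
    rw [real_inner_smul_left, real_inner_smul_right, hw]; ring
  refine ⟨fun i => s • w i, fun i => ?_, fun i j hij => ?_⟩
  · rw [← pow_eq_one_iff_of_nonneg (norm_nonneg _) two_ne_zero, ← real_inner_self_eq_norm_sq,
      hsw, if_pos rfl, hs]
    field_simp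
    exact div_self (by linarith)
  · rw [hsw, if_neg hij, hs]
    field_simp
    ring

namespace SimpleGraph

def IsVectorColoring {V E : Type*} [NormedAddCommGroup E] [InnerProductSpace ℝ E]
    (G : SimpleGraph V) (k : ℝ) (u : V → E) : Prop :=
  (∀ i, ‖u i‖ = 1) ∧ ∀ i j, G.Adj i j → inner ℝ (u i) (u j) ≤ -(1 / (k - 1))

variable {V E : Type*} [NormedAddCommGroup E] [InnerProductSpace ℝ E]
  {G : SimpleGraph V} {k : ℝ} {u : V → E}

theorem IsVectorColoring.hadamard_gram_le [Fintype V] [DecidableRel G.Adj]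
    (hu : G.IsVectorColoring k u) (i j : V) :
    (G.adjMatrix ℝ ⊙ gram ℝ u) i j ≤ (-(1 / (k - 1)) • G.adjMatrix ℝ) i j := by
  by_cases hij : G.Adj i j
  · simpa [hij] using hu.2 i j hij
  · simp [hij]

theorem IsVectorColoring.lamMin_adjMatrix_le {n : ℕ} [NeZero n] {G : SimpleGraph (Fin n)}
    {u : Fin n → E} (hu : G.IsVectorColoring k u) (hk : 1 < k) :
    lamMin (G.adjMatrix ℝ) ≤ -(1 / (k - 1)) * lamMax (G.adjMatrix ℝ) := by
  set A := G.adjMatrix ℝ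
  have hA : A.IsHermitian := G.isHermitian_adjMatrix ℝ
  obtain ⟨x, hx, hxA⟩ := hA.exists_dotProduct_mulVec_eq_lamMax
  have habs : |x| ⬝ᵥ |x| = 1 := by simpa [dotProduct, abs_mul_abs_self] using hx
  have ht : -(1 / (k - 1)) ≤ 0 := neg_nonpos.mpr (one_div_pos.mpr (sub_pos.mpr hk)).le
  calc lamMin A = lamMin A * (|x| ⬝ᵥ |x|) := by rw [habs, mul_one]
    _ ≤ |x| ⬝ᵥ ((A ⊙ gram ℝ u) *ᵥ |x|) := hA.lamMin_mul_dotProduct_self_le_hadamard_gram hu.1 _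
    _ ≤ |x| ⬝ᵥ ((-(1 / (k - 1)) • A) *ᵥ |x|) :=
      dotProduct_mulVec_mono hu.hadamard_gram_le (abs_nonneg x)
    _ = -(1 / (k - 1)) * (|x| ⬝ᵥ (A *ᵥ |x|)) := by
      rw [smul_mulVec, dotProduct_smul, smul_eq_mul]
    _ ≤ -(1 / (k - 1)) * lamMax A := by
      refine mul_le_mul_of_nonpos_left ?_ ht
      rw [← hxA]
      exact dotProduct_mulVec_le_abs (fun i j => ite_nonneg zero_le_one le_rfl) x

theorem exists_adj_of_lamMin_adjMatrix_neg {n : ℕ} {G : SimpleGraph (Fin n)}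
    (h : lamMin (G.adjMatrix ℝ) < 0) : ∃ i j, G.Adj i j := by
  by_contra! hG
  have hzero : G.adjMatrix ℝ = 0 := by
    ext i j
    simp [hG i j]
  have hA := G.isHermitian_adjMatrix ℝ
  refine h.not_ge (Real.sInf_nonneg fun x hx => ?_)
  rw [hA.spectrum_real_eq_range_eigenvalues, hA.eigenvalues_eq_zero_iff.mpr hzero] at hx
  obtain ⟨i, rfl⟩ := hx
  rfl

theorem le_vecChromNum {V : Type*} [Fintype V] [DecidableEq V] {G : SimpleGraph V} {b : ℝ}
    (hV : 2 ≤ Fintype.card V)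
    (h : ∀ k (u : V → EuclideanSpace ℝ V), 2 ≤ k → G.IsVectorColoring k u → b ≤ k) :
    b ≤ vecChromNum G := by
  -- `sInf ∅ = 0`, so an admissible `k` is needed: the regular simplex gives `k = card V`.
  obtain ⟨u, hu, hinner⟩ := EuclideanSpace.exists_regular_simplex hV
  refine le_csInf ⟨Fintype.card V, by exact_mod_cast hV, u, hu, fun i j hij => ?_⟩
    fun k ⟨hk, u, hu⟩ => h k u hk hu
  exact (hinner i j hij.ne).le

end SimpleGraph

theorem hoffman_bound_vector_chromatic_number_general {n : ℕ} (G : SimpleGraph (Fin n))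
    (hneg : lamMin (G.adjMatrix ℝ) < 0) :
    1 + lamMax (G.adjMatrix ℝ) / |lamMin (G.adjMatrix ℝ)| ≤ vecChromNum G := by
  obtain ⟨i, j, hij⟩ := SimpleGraph.exists_adj_of_lamMin_adjMatrix_neg hneg
  have : NeZero n := ⟨i.pos.ne'⟩
  have hcard : 2 ≤ Fintype.card (Fin n) := Fintype.one_lt_card_iff_nontrivial.mpr ⟨i, j, hij.ne⟩
  refine SimpleGraph.le_vecChromNum hcard fun k u hk hu => ?_
  have hk1 : 0 < k - 1 := by linarith
  have hbound := hu.lamMin_adjMatrix_le (by linarith)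
  rw [abs_of_neg hneg, ← le_sub_iff_add_le', div_le_iff₀ (neg_pos.mpr hneg)]
  calc lamMax (G.adjMatrix ℝ)
      = (k - 1) * (1 / (k - 1) * lamMax (G.adjMatrix ℝ)) := by field_simp
    _ ≤ (k - 1) * -lamMin (G.adjMatrix ℝ) := by gcongr; linarith

/-- Hoffman bound for the vector chromatic number of a connected graph:
`1 + mu1/|muN| <= chi_v(G)`. -/
theorem hoffman_bound_vector_chromatic_number {n : ℕ} (G : SimpleGraph (Fin n))
    (hconn : G.Connected) (hneg : lamMin (G.adjMatrix ℝ) < 0) :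
    1 + lamMax (G.adjMatrix ℝ) / |lamMin (G.adjMatrix ℝ)| ≤ vecChromNum G :=
  hoffman_bound_vector_chromatic_number_general G hneg
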